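/- arXiv:math/0505081 — 3 statements merged into one kernel-verified Lean document; each statement's English description precedes it below -/
import Mathlib

section
/- Let Γ denote the Euler Gamma function and for integers m ≥ 2 and N ≥ 4 set c_m(N) := −m·( log(Γ(m/2)/Γ(1/2)) − m(m−1)/(4N) + 1/(12N) ). Then m · log( Γ(N + m/2)·Γ(1/2) / ( Γ(m/2)·Γ(N + 1/2) ) ) ≤ (m(m−1)/2)·log N + c_m(N). -/
/-!
Log-convexity of `Γ` between `x` and `x + 1`, together with `Γ(x + 1) = x Γ(x)`, gives
`log Γ(x + t) ≤ log Γ(x) + t log x` for `0 ≤ t ≤ 1`. Taking `m - 1` half-steps from `N + 1/2` and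
bounding each `log (N + j/2)` by `log N + j/(2N)` yields
`log Γ(N + m/2) - log Γ(N + 1/2) ≤ (m - 1)/2 · log N + m(m - 1)/(8N)`. The `Γ(m/2)/Γ(1/2)` terms
cancel, and the slack `m(m - 1)/(8N) ≥ 1/(4N)` absorbs the `1/(12N)` in `c_m(N)`.
-/

open Finset

namespace Real

theorem log_Gamma_add_le_of_le_one {x t : ℝ} (hx : 0 < x) (ht₀ : 0 ≤ t) (ht₁ : t ≤ 1) :
    log (Gamma (x + t)) ≤ log (Gamma x) + t * log x := by
  have hconv := convexOn_log_Gamma.2 (Set.mem_Ioi.2 hx) (Set.mem_Ioi.2 (by linarith : 0 < x + 1))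
    (sub_nonneg.2 ht₁) ht₀ (sub_add_cancel 1 t)
  simp only [Function.comp_apply, smul_eq_mul] at hconv
  rw [Gamma_add_one hx.ne', log_mul hx.ne' (Gamma_pos_of_pos hx).ne'] at hconv
  calc log (Gamma (x + t)) = log (Gamma ((1 - t) * x + t * (x + 1))) := by ring_nf
    _ ≤ _ := hconv
    _ = _ := by ring

theorem log_Gamma_add_nat_mul_le {y t : ℝ} (hy : 0 < y) (ht₀ : 0 ≤ t) (ht₁ : t ≤ 1) (k : ℕ) :
    log (Gamma (y + k * t)) ≤ log (Gamma y) + t * ∑ j ∈ range k, log (y + j * t) := by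
  induction k with
  | zero => simp
  | succ k ih =>
    have step := log_Gamma_add_le_of_le_one (by positivity : 0 < y + k * t) ht₀ ht₁
    rw [sum_range_succ]
    calc log (Gamma (y + (k + 1 : ℕ) * t)) = log (Gamma (y + k * t + t)) := by push_cast; ring_nf
      _ ≤ _ := by linarith

theorem log_add_le_log_add_div {x t : ℝ} (hx : 0 < x) (hxt : 0 < x + t) :
    log (x + t) ≤ log x + t / x := by
  have h := log_le_sub_one_of_pos (div_pos hxt hx)
  rw [log_div hxt.ne' hx.ne', add_div, div_self hx.ne'] at h
  linarith

theorem sum_range_log_add_succ_mul_le {x t : ℝ} (hx : 0 < x) (ht : 0 ≤ t) (k : ℕ) :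
    ∑ j ∈ range k, log (x + (j + 1) * t) ≤ k * log x + t * (k * (k + 1)) / (2 * x) := by
  induction k with
  | zero => simp
  | succ k ih =>
    have step := log_add_le_log_add_div hx (by positivity : 0 < x + (k + 1) * t)
    rw [sum_range_succ]
    calc _ ≤ k * log x + t * (k * (k + 1)) / (2 * x) + (log x + (k + 1) * t / x) := by
          gcongr
      _ = _ := by push_cast; field_simp; ring

theorem log_Gamma_add_succ_mul_le {x t : ℝ} (hx : 0 < x) (ht₀ : 0 ≤ t) (ht₁ : t ≤ 1) (k : ℕ) :
    log (Gamma (x + (k + 1) * t)) ≤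
      log (Gamma (x + t)) + t * (k * log x + t * (k * (k + 1)) / (2 * x)) := by
  have iter := log_Gamma_add_nat_mul_le (by positivity : 0 < x + t) ht₀ ht₁ k
  have sum := sum_range_log_add_succ_mul_le hx ht₀ k
  calc log (Gamma (x + (k + 1) * t)) = log (Gamma (x + t + k * t)) := by ring_nf
    _ ≤ log (Gamma (x + t)) + t * ∑ j ∈ range k, log (x + (j + 1) * t) := by
        simpa only [add_mul, one_mul, add_assoc, add_comm t] using iter
    _ ≤ _ := by gcongr

end Real

open Real

/-- The Gassiat–Boucheron bound: for integers `m ≥ 2` and `N ≥ 4`,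
`m * log( Γ(N + m/2) Γ(1/2) / (Γ(m/2) Γ(N + 1/2)) ) ≤ (m(m-1)/2) log N + c_m(N)`,
where `c_m(N) = -m (log(Γ(m/2)/Γ(1/2)) - m(m-1)/(4N) + 1/(12N))`. -/
theorem gamma_ratio_log_bound (m N : ℕ) (hm : 2 ≤ m) (hN : 4 ≤ N) :
    (m : ℝ) * Real.log (Real.Gamma ((N : ℝ) + (m : ℝ) / 2) * Real.Gamma (1 / 2) /
        (Real.Gamma ((m : ℝ) / 2) * Real.Gamma ((N : ℝ) + 1 / 2))) ≤
      (m : ℝ) * ((m : ℝ) - 1) / 2 * Real.log (N : ℝ) +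
        (-(m : ℝ) * (Real.log (Real.Gamma ((m : ℝ) / 2) / Real.Gamma (1 / 2)) -
          (m : ℝ) * ((m : ℝ) - 1) / (4 * (N : ℝ)) + 1 / (12 * (N : ℝ)))) := by
  obtain ⟨k, rfl⟩ : ∃ k, m = k + 1 := ⟨m - 1, by omega⟩
  have hk : (1 : ℝ) ≤ k := by exact_mod_cast (by omega : 1 ≤ k)
  have hN₀ : (0 : ℝ) < N := by exact_mod_cast (by omega : 0 < N)
  have bound := log_Gamma_add_succ_mul_le hN₀ (by norm_num : (0 : ℝ) ≤ 1 / 2) (by norm_num) k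
  have hpos : ∀ {s : ℝ}, 0 < s → Gamma s ≠ 0 := fun hs => (Gamma_pos_of_pos hs).ne'
  push_cast
  rw [log_div (mul_ne_zero (hpos (by positivity)) (hpos (by norm_num)))
      (mul_ne_zero (hpos (by positivity)) (hpos (by positivity))),
    log_mul (hpos (by positivity)) (hpos (by norm_num)),
    log_mul (hpos (by positivity)) (hpos (by positivity)),
    log_div (hpos (by positivity)) (hpos (by norm_num))]
  have slack : 1 / (12 * (N : ℝ)) ≤ (k + 1) * k / (8 * N) := by
    rw [div_le_div_iff₀ (by positivity) (by positivity)]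
    nlinarith [mul_nonneg (sub_nonneg.2 hk) hN₀.le]
  have key : log (Gamma (N + (k + 1) / 2)) - log (Gamma (N + 1 / 2)) ≤
      k / 2 * log N + (k + 1) * k / (4 * N) - 1 / (12 * N) := by
    rw [show (N : ℝ) + (k + 1) / 2 = N + (k + 1) * (1 / 2) by ring]
    linear_combination bound + slack
  linear_combination (k + 1 : ℝ) * key
end

section
/- Let S be a finite set with card(S) = r ≥ 2 and let K : S × S → ℝ be a row-stochastic kernel (K(x,y) ≥ 0 and ∑_{y∈S} K(x,y) = 1 for every x) whose entries are uniformly bounded below: K(x,y) ≥ K* for all x,y, with K* > 0. Then there exists a unique probability vector π on S that is K-invariant (π(y) = ∑_x π(x) K(x,y) for all y), and for every x ∈ S and every integer t ≥ 1 the t-step transition probabilities satisfy ∑_{y∈S} | K^t(x,y) − π(y) | ≤ r · (1 − 2K*)^{t−1}, where K^t denotes the t-th matrix power of K. -/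
/-! For a vector `μ` with `∑ μ = 0`, subtracting `K*` from every entry of `K` does not change
`μ ᵥ* K`, and leaves a nonnegative matrix with row sums `1 - r K*`; hence `K` contracts the
`ℓ¹` norm of zero-sum vectors by `1 - r K* ≤ 1 - 2 K* < 1`. The constant vector is fixed by `K`,
so `K - 1` is singular and has a nonzero left null vector, whose sum cannot vanish by the
contraction; normalised, it is the invariant `π`. Contraction applied to `π' - π` gives
uniqueness, applied to `e_x - π` (of norm at most `2`) gives the geometric bound, and the latter
exhibits `π` as a limit of nonnegative rows of `K ^ t`. -/

open Finset

namespace Matrix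

theorem vecMul_pow_eq_self {S R : Type*} [Fintype S] [DecidableEq S] [Semiring R]
    {K : Matrix S S R} {π : S → R} (hπ : π ᵥ* K = π) (t : ℕ) : π ᵥ* K ^ t = π := by
  induction t with
  | zero => rw [pow_zero, vecMul_one]
  | succ t ih => rw [pow_succ, ← vecMul_vecMul, ih, hπ]

variable {S : Type*} [Fintype S] {K : Matrix S S ℝ} {δ : ℝ}

theorem sum_vecMul_of_sum_row_eq_one (hrow : ∀ x, ∑ y, K x y = 1) (μ : S → ℝ) :
    ∑ y, (μ ᵥ* K) y = ∑ x, μ x := by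
  simp only [vecMul, dotProduct]
  rw [sum_comm]
  simp [← mul_sum, hrow]

theorem card_mul_le_one_of_le (hrow : ∀ x, ∑ y, K x y = 1) (hlb : ∀ x y, δ ≤ K x y) :
    (Fintype.card S : ℝ) * δ ≤ 1 := by
  cases isEmpty_or_nonempty S with
  | inl _ => simp
  | inr h =>
    obtain ⟨x⟩ := h
    simpa [← hrow x] using sum_le_sum fun y (_ : y ∈ univ) => hlb x y

theorem sum_abs_vecMul_le_of_sum_eq_zero (hrow : ∀ x, ∑ y, K x y = 1)
    (hlb : ∀ x y, δ ≤ K x y) {μ : S → ℝ} (hμ : ∑ x, μ x = 0) :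
    ∑ y, |(μ ᵥ* K) y| ≤ (1 - Fintype.card S * δ) * ∑ x, |μ x| := by
  have hshift : ∀ y, (μ ᵥ* K) y = ∑ x, μ x * (K x y - δ) := fun y => by
    simp [vecMul, dotProduct, mul_sub, sum_sub_distrib, ← sum_mul, hμ]
  calc ∑ y, |(μ ᵥ* K) y| ≤ ∑ y, ∑ x, |μ x| * (K x y - δ) := by
        refine sum_le_sum fun y _ => (hshift y ▸ abs_sum_le_sum_abs _ _).trans_eq ?_
        refine sum_congr rfl fun x _ => ?_
        rw [abs_mul, abs_of_nonneg (sub_nonneg.2 (hlb x y))]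
    _ = (1 - Fintype.card S * δ) * ∑ x, |μ x| := by
        rw [sum_comm, mul_sum]
        refine sum_congr rfl fun x _ => ?_
        rw [← mul_sum, sum_sub_distrib, hrow x, sum_const, card_univ, nsmul_eq_mul, mul_comm]

theorem sum_abs_vecMul_pow_le_of_sum_eq_zero [DecidableEq S] (hrow : ∀ x, ∑ y, K x y = 1)
    (hlb : ∀ x y, δ ≤ K x y) {μ : S → ℝ} (hμ : ∑ x, μ x = 0) (t : ℕ) :
    ∑ y, |(μ ᵥ* K ^ t) y| ≤ (1 - Fintype.card S * δ) ^ t * ∑ x, |μ x| := by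
  induction t generalizing μ with
  | zero => simp
  | succ t ih =>
    have hc : 0 ≤ 1 - Fintype.card S * δ := sub_nonneg.2 (card_mul_le_one_of_le hrow hlb)
    calc ∑ y, |(μ ᵥ* K ^ (t + 1)) y| = ∑ y, |((μ ᵥ* K) ᵥ* K ^ t) y| := by
          rw [pow_succ', vecMul_vecMul]
      _ ≤ (1 - Fintype.card S * δ) ^ t * ∑ x, |(μ ᵥ* K) x| :=
          ih (by rw [sum_vecMul_of_sum_row_eq_one hrow, hμ])
      _ ≤ (1 - Fintype.card S * δ) ^ t * ((1 - Fintype.card S * δ) * ∑ x, |μ x|) :=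
          mul_le_mul_of_nonneg_left (sum_abs_vecMul_le_of_sum_eq_zero hrow hlb hμ)
            (pow_nonneg hc t)
      _ = (1 - Fintype.card S * δ) ^ (t + 1) * ∑ x, |μ x| := by ring

theorem one_sub_card_mul_lt_one [Nonempty S] (hδ : 0 < δ) : 1 - Fintype.card S * δ < 1 :=
  sub_lt_self 1 (mul_pos (Nat.cast_pos.2 Fintype.card_pos) hδ)

theorem eq_zero_of_vecMul_eq_self_of_sum_eq_zero [Nonempty S] (hrow : ∀ x, ∑ y, K x y = 1)
    (hlb : ∀ x y, δ ≤ K x y) (hδ : 0 < δ) {v : S → ℝ} (hv : v ᵥ* K = v)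
    (hsum : ∑ x, v x = 0) : v = 0 := by
  have hle := sum_abs_vecMul_le_of_sum_eq_zero hrow hlb hsum
  rw [hv] at hle
  have hzero : ∑ x, |v x| = 0 := by
    nlinarith [one_sub_card_mul_lt_one (S := S) hδ,
      sum_nonneg fun x (_ : x ∈ univ) => abs_nonneg (v x)]
  funext x
  simpa using (sum_eq_zero_iff_of_nonneg fun x _ => abs_nonneg (v x)).1 hzero x (mem_univ x)

theorem exists_vecMul_eq_self_of_sum_eq_one [DecidableEq S] [Nonempty S]
    (hrow : ∀ x, ∑ y, K x y = 1) (hlb : ∀ x y, δ ≤ K x y) (hδ : 0 < δ) :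
    ∃ π : S → ℝ, π ᵥ* K = π ∧ ∑ x, π x = 1 := by
  have hsingular : (K - 1).det = 0 := by
    rw [← exists_mulVec_eq_zero_iff]
    refine ⟨1, one_ne_zero, ?_⟩
    rw [sub_mulVec, one_mulVec, sub_eq_zero]
    funext x
    simp [mulVec, dotProduct, hrow]
  obtain ⟨w, hw0, hw⟩ := exists_vecMul_eq_zero_iff.2 hsingular
  rw [vecMul_sub, vecMul_one, sub_eq_zero] at hw
  have hsum : ∑ x, w x ≠ 0 := fun h =>
    hw0 (eq_zero_of_vecMul_eq_self_of_sum_eq_zero hrow hlb hδ hw h)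
  refine ⟨(∑ x, w x)⁻¹ • w, by rw [smul_vecMul, hw], ?_⟩
  simp [← mul_sum, hsum]

theorem sum_abs_pow_apply_sub_le [DecidableEq S] (hrow : ∀ x, ∑ y, K x y = 1)
    (hlb : ∀ x y, δ ≤ K x y) {π : S → ℝ} (hπ : π ᵥ* K = π) (hsum : ∑ x, π x = 1)
    (x : S) (t : ℕ) :
    ∑ y, |(K ^ t) x y - π y| ≤
      (1 - Fintype.card S * δ) ^ t * ∑ y, |(Pi.single x 1 : S → ℝ) y - π y| := by
  have hμ : ∑ y, ((Pi.single x 1 : S → ℝ) - π) y = 0 := by simp [sum_sub_distrib, hsum]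
  have h := sum_abs_vecMul_pow_le_of_sum_eq_zero hrow hlb hμ t
  rwa [sub_vecMul, single_one_vecMul, vecMul_pow_eq_self hπ] at h

theorem nonneg_of_vecMul_eq_self [DecidableEq S] [Nonempty S] (hrow : ∀ x, ∑ y, K x y = 1)
    (hlb : ∀ x y, δ ≤ K x y) (hδ : 0 < δ) {π : S → ℝ} (hπ : π ᵥ* K = π)
    (hsum : ∑ x, π x = 1) (y : S) : 0 ≤ π y := by
  obtain ⟨x⟩ := ‹Nonempty S›
  set M := ∑ y, |(Pi.single x 1 : S → ℝ) y - π y|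
  set c := 1 - Fintype.card S * δ
  have hK : K ∈ rowStochastic ℝ S :=
    mem_rowStochastic_iff_sum.2 ⟨fun x y => hδ.le.trans (hlb x y), hrow⟩
  have hbound : ∀ t : ℕ, -(c ^ t * M) ≤ π y := fun t => by
    have hrow_t : |(K ^ t) x y - π y| ≤ c ^ t * M :=
      (single_le_sum (f := fun y => |(K ^ t) x y - π y|) (fun _ _ => abs_nonneg _)
        (mem_univ y)).trans (sum_abs_pow_apply_sub_le hrow hlb hπ hsum x t)
    have hentry : 0 ≤ (K ^ t) x y := nonneg_of_mem_rowStochastic (pow_mem hK t)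
    linarith [(abs_le.1 hrow_t).2]
  have hc : 0 ≤ c := sub_nonneg.2 (card_mul_le_one_of_le hrow hlb)
  have hlim : Filter.Tendsto (fun t : ℕ => -(c ^ t * M)) Filter.atTop (nhds 0) := by
    simpa using ((tendsto_pow_atTop_nhds_zero_of_lt_one hc
      (one_sub_card_mul_lt_one hδ)).mul_const M).neg
  exact le_of_tendsto' hlim hbound

theorem sum_abs_single_sub_le_two [DecidableEq S] {π : S → ℝ} (hπ : ∀ y, 0 ≤ π y)
    (hsum : ∑ y, π y = 1) (x : S) : ∑ y, |(Pi.single x 1 : S → ℝ) y - π y| ≤ 2 := by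
  calc ∑ y, |(Pi.single x 1 : S → ℝ) y - π y|
      ≤ ∑ y, ((Pi.single x 1 : S → ℝ) y + π y) := sum_le_sum fun y _ =>
        (abs_sub _ _).trans_eq <| by
          have hsingle : (0 : S → ℝ) ≤ Pi.single x 1 := Pi.single_nonneg.2 zero_le_one
          rw [abs_of_nonneg (hsingle y), abs_of_nonneg (hπ y)]
    _ = 2 := by simp [sum_add_distrib, hsum]; norm_num

end Matrix

open Matrix

theorem finite_kernel_geometric_ergodicity_general
    (S : Type*) [Fintype S] [DecidableEq S] (r : ℕ) (hcard : Fintype.card S = r)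
    (hr : 2 ≤ r) (K : Matrix S S ℝ) (Kstar : ℝ) (hKstar : 0 < Kstar)
    (hlb : ∀ x y, Kstar ≤ K x y)
    (hrow : ∀ x, ∑ y, K x y = 1) :
    ∃ π : S → ℝ,
      ((∀ y, 0 ≤ π y) ∧ (∑ y, π y) = 1 ∧ (∀ y, π y = ∑ x, π x * K x y)) ∧
      (∀ π' : S → ℝ,
        ((∀ y, 0 ≤ π' y) ∧ (∑ y, π' y) = 1 ∧ (∀ y, π' y = ∑ x, π' x * K x y)) → π' = π) ∧
      (∀ (x : S) (t : ℕ), 1 ≤ t →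
        ∑ y, |(K ^ t) x y - π y| ≤ (r : ℝ) * (1 - 2 * Kstar) ^ (t - 1)) := by
  subst hcard
  have : Nonempty S := Fintype.card_pos_iff.1 (by omega)
  obtain ⟨π, hπK, hπsum⟩ := exists_vecMul_eq_self_of_sum_eq_one hrow hlb hKstar
  have hπnn := nonneg_of_vecMul_eq_self hrow hlb hKstar hπK hπsum
  refine ⟨π, ⟨hπnn, hπsum, fun y => (congrFun hπK y).symm⟩, ?_, ?_⟩
  · rintro π' ⟨-, hπ'sum, hπ'K⟩
    have hπ'K : π' ᵥ* K = π' := funext fun y => (hπ'K y).symm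
    refine sub_eq_zero.1 (eq_zero_of_vecMul_eq_self_of_sum_eq_zero hrow hlb hKstar ?_ ?_)
    · rw [sub_vecMul, hπK, hπ'K]
    · simp [sum_sub_distrib, hπ'sum, hπsum]
  · intro x t ht
    obtain ⟨s, rfl⟩ := Nat.exists_eq_add_of_le' ht
    have hr' : (2 : ℝ) ≤ Fintype.card S := by exact_mod_cast hr
    have hc : 0 ≤ 1 - Fintype.card S * Kstar := sub_nonneg.2 (card_mul_le_one_of_le hrow hlb)
    calc ∑ y, |(K ^ (s + 1)) x y - π y| ≤ (1 - Fintype.card S * Kstar) ^ (s + 1) * 2 :=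
          (sum_abs_pow_apply_sub_le hrow hlb hπK hπsum x (s + 1)).trans <|
            mul_le_mul_of_nonneg_left (sum_abs_single_sub_le_two hπnn hπsum x) (pow_nonneg hc _)
      _ ≤ (1 - 2 * Kstar) ^ (s + 1) * 2 := by gcongr
      _ ≤ Fintype.card S * (1 - 2 * Kstar) ^ (s + 1 - 1) := by
          rw [Nat.add_sub_cancel, pow_succ]
          nlinarith [pow_nonneg (show 0 ≤ 1 - 2 * Kstar by nlinarith) s]

/-- A row-stochastic kernel on a finite set of cardinality `r ≥ 2` whose entries are bounded
below by `K* > 0` has a unique invariant probability vector `π`, and the `t`-step transition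
probabilities converge to `π` uniformly geometrically:
`∑_y |K^t(x,y) - π(y)| ≤ r (1 - 2K*)^{t-1}`. -/
theorem finite_kernel_geometric_ergodicity
    (S : Type*) [Fintype S] [DecidableEq S] (r : ℕ) (hcard : Fintype.card S = r)
    (hr : 2 ≤ r) (K : Matrix S S ℝ) (Kstar : ℝ) (hKstar : 0 < Kstar)
    (hlb : ∀ x y, Kstar ≤ K x y) (hnn : ∀ x y, 0 ≤ K x y)
    (hrow : ∀ x, ∑ y, K x y = 1) :
    ∃ π : S → ℝ,
      ((∀ y, 0 ≤ π y) ∧ (∑ y, π y) = 1 ∧ (∀ y, π y = ∑ x, π x * K x y)) ∧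
      (∀ π' : S → ℝ,
        ((∀ y, 0 ≤ π' y) ∧ (∑ y, π' y) = 1 ∧ (∀ y, π' y = ∑ x, π' x * K x y)) → π' = π) ∧
      (∀ (x : S) (t : ℕ), 1 ≤ t →
        ∑ y, |(K ^ t) x y - π y| ≤ (r : ℝ) * (1 - 2 * Kstar) ^ (t - 1)) :=
  finite_kernel_geometric_ergodicity_general S r hcard hr K Kstar hKstar hlb hrow
end

section
/- (Krichevsky–Trofimov bound.) Let m ≥ 1 and let n_1,…,n_m be natural numbers with n := n_1 + ⋯ + n_m ≥ 1. Then ∏_{j=1}^m (n_j/n)^{n_j} ≤ ( ∏_{j=1}^m Γ(n_j + 1/2) ) / ( Γ(1/2)^{m−1} · Γ(n + 1/2) ), with the convention 0^0 = 1, where Γ is the Euler Gamma function. -/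
/-!
Put `w k = Γ(k + 1/2) / k^k`. The bound says `w 0 ^ (m - 1) * w n ≤ ∏ j, w n_j`, which follows
by induction on the number of blocks from the two-block case `w (a + b) * w 0 ≤ w a * w b`.
That case holds because the successive quotient `w (k + 1) / w k = (k + 1/2) k^k / (k + 1)^(k + 1)`
is decreasing in `k`: the derivative of its logarithm is `1 / (x + 1/2) - log (1 + 1/x) ≤ 0`,
since `1 / (x + 1/2)` is the first term of the series
`log (1 + 1/x) = ∑ 2 / ((2j + 1) (2x + 1)^(2j + 1))`.
-/

open Real Set Finset

lemma Real.inv_add_half_le_log_add_one_sub_log {x : ℝ} (hx : 0 < x) :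
    (x + 1 / 2)⁻¹ ≤ log (x + 1) - log x := by
  have hsum := hasSum_log_one_add_inv hx
  rw [← log_div (by positivity) hx.ne', add_div, div_self hx.ne', one_div x]
  refine le_trans (le_of_eq ?_) (le_hasSum hsum 0 fun k _ ↦ by positivity)
  norm_num
  field_simp

lemma Nat.cast_pow_self_pos {R : Type*} [Semiring R] [PartialOrder R] [IsStrictOrderedRing R]
    (k : ℕ) : (0 : R) < (k : R) ^ k := by
  exact_mod_cast Nat.pow_self_pos

namespace KrichevskyTrofimov

noncomputable def logRatio (x : ℝ) : ℝ :=
  log (x + 1 / 2) + x * log x - (x + 1) * log (x + 1)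

lemma hasDerivAt_logRatio {x : ℝ} (hx : 0 < x) :
    HasDerivAt logRatio ((x + 1 / 2)⁻¹ + log x - log (x + 1)) x := by
  have h1 := ((hasDerivAt_id x).add_const (1 / 2 : ℝ)).log
    (by simp only [id_eq, one_div, ne_eq]; positivity)
  have h2 := hasDerivAt_mul_log hx.ne'
  have h3 := (hasDerivAt_mul_log (x := x + 1) (by positivity)).comp_add_const x 1
  exact ((h1.add h2).sub h3).congr_deriv (by simp only [id]; ring)

lemma antitoneOn_logRatio : AntitoneOn logRatio (Ici 0) := by
  refine antitoneOn_of_hasDerivWithinAt_nonpos (convex_Ici 0) ?_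
    (fun x hx ↦ (hasDerivAt_logRatio (x := x) (by simpa using hx)).hasDerivWithinAt) ?_
  · have : ContinuousOn (fun x : ℝ ↦ log (x + 1 / 2)) (Ici 0) :=
      ContinuousOn.log (by fun_prop) fun x hx ↦ by simp only [Set.mem_Ici] at hx; positivity
    exact (this.add continuous_mul_log.continuousOn).sub
      ((continuous_add_const 1).mul_log).continuousOn
  · intro x hx
    rw [interior_Ici] at hx
    linarith [inv_add_half_le_log_add_one_sub_log (x := x) hx]

noncomputable def ratio (k : ℕ) : ℝ :=
  (k + 1 / 2) * (k : ℝ) ^ k / ((k : ℝ) + 1) ^ (k + 1)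

lemma ratio_pos (k : ℕ) : 0 < ratio k := by
  have := Nat.cast_pow_self_pos (R := ℝ) k
  unfold ratio
  positivity

lemma log_ratio (k : ℕ) : log (ratio k) = logRatio k := by
  have := Nat.cast_pow_self_pos (R := ℝ) k
  rw [ratio, logRatio, log_div (by positivity) (by positivity), log_mul (by positivity)
    this.ne', log_pow, log_pow]
  push_cast
  ring

lemma ratio_antitone : Antitone ratio := by
  intro k l hkl
  rw [← log_le_log_iff (ratio_pos l) (ratio_pos k), log_ratio, log_ratio]
  exact antitoneOn_logRatio (mem_Ici.2 k.cast_nonneg) (mem_Ici.2 l.cast_nonneg)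
    (by exact_mod_cast hkl)

noncomputable def weight (k : ℕ) : ℝ :=
  Gamma (k + 1 / 2) / (k : ℝ) ^ k

lemma weight_pos (k : ℕ) : 0 < weight k :=
  div_pos (Gamma_pos_of_pos (by positivity)) (Nat.cast_pow_self_pos k)

lemma weight_zero : weight 0 = Gamma (1 / 2) := by
  simp [weight]

lemma weight_succ (k : ℕ) : weight (k + 1) = ratio k * weight k := by
  have := (Nat.cast_pow_self_pos (R := ℝ) k).ne'
  rw [weight, weight, ratio, Nat.cast_succ, add_right_comm, Gamma_add_one (by positivity)]
  field_simp

lemma weight_add_mul_weight_zero_le (a b : ℕ) :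
    weight (a + b) * weight 0 ≤ weight a * weight b := by
  induction a with
  | zero => rw [zero_add, mul_comm]
  | succ a ih =>
    calc weight (a + 1 + b) * weight 0 = ratio (a + b) * (weight (a + b) * weight 0) := by
          rw [Nat.add_right_comm, weight_succ, mul_assoc]
      _ ≤ ratio a * (weight a * weight b) :=
          mul_le_mul (ratio_antitone (Nat.le_add_right a b)) ih
            (mul_pos (weight_pos _) (weight_pos _)).le (ratio_pos a).le
      _ = weight (a + 1) * weight b := by rw [weight_succ, mul_assoc]

lemma weight_zero_pow_card_mul_weight_sum_le {ι : Type*} (s : Finset ι) (f : ι → ℕ) :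
    weight 0 ^ #s * weight (∑ i ∈ s, f i) ≤ weight 0 * ∏ i ∈ s, weight (f i) := by
  induction s using Finset.cons_induction with
  | empty => simp
  | cons a s ha ih =>
    rw [card_cons, sum_cons, prod_cons]
    have h0 := (weight_pos 0).le
    calc weight 0 ^ (#s + 1) * weight (f a + ∑ i ∈ s, f i)
        = weight 0 ^ #s * (weight (f a + ∑ i ∈ s, f i) * weight 0) := by ring
      _ ≤ weight 0 ^ #s * (weight (f a) * weight (∑ i ∈ s, f i)) :=
          mul_le_mul_of_nonneg_left (weight_add_mul_weight_zero_le _ _) (pow_nonneg h0 _)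
      _ = weight (f a) * (weight 0 ^ #s * weight (∑ i ∈ s, f i)) := by ring
      _ ≤ weight (f a) * (weight 0 * ∏ i ∈ s, weight (f i)) :=
          mul_le_mul_of_nonneg_left ih (weight_pos _).le
      _ = weight 0 * (weight (f a) * ∏ i ∈ s, weight (f i)) := by ring

end KrichevskyTrofimov

open KrichevskyTrofimov

theorem krichevsky_trofimov_bound_general (m : ℕ) (hm : 1 ≤ m) (n : Fin m → ℕ) :
    ∏ j, ((n j : ℝ) / ((∑ j', n j' : ℕ) : ℝ)) ^ n j ≤
      (∏ j, Real.Gamma ((n j : ℝ) + 1 / 2)) /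
        (Real.Gamma (1 / 2) ^ (m - 1) * Real.Gamma (((∑ j', n j' : ℕ) : ℝ) + 1 / 2)) := by
  obtain ⟨m, rfl⟩ : ∃ k, m = k + 1 := ⟨m - 1, by omega⟩
  have hblocks := weight_zero_pow_card_mul_weight_sum_le univ n
  rw [card_univ, Fintype.card_fin, pow_succ, mul_right_comm, mul_comm (weight 0)] at hblocks
  have key := le_of_mul_le_mul_right hblocks (weight_pos 0)
  rw [weight_zero] at key
  simp only [weight, prod_div_distrib] at key
  set N := ∑ j', n j'
  have hN := Nat.cast_pow_self_pos (R := ℝ) N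
  have hprod : 0 < ∏ j, (n j : ℝ) ^ n j := prod_pos fun j _ ↦ Nat.cast_pow_self_pos (n j)
  rw [← mul_div_assoc, div_le_div_iff₀ hN hprod] at key
  simp_rw [div_pow]
  rw [prod_div_distrib, prod_pow_eq_pow_sum, Nat.add_sub_cancel,
    div_le_div_iff₀ hN (by positivity)]
  linarith

/-- Krichevsky–Trofimov bound: for counts `n₁, …, n_m` with total `n ≥ 1`,
`∏_j (n_j/n)^{n_j} ≤ (∏_j Γ(n_j + 1/2)) / (Γ(1/2)^{m-1} Γ(n + 1/2))`,
with the convention `0^0 = 1`. -/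
theorem krichevsky_trofimov_bound (m : ℕ) (hm : 1 ≤ m) (n : Fin m → ℕ)
    (hn : 1 ≤ ∑ j, n j) :
    ∏ j, ((n j : ℝ) / ((∑ j', n j' : ℕ) : ℝ)) ^ n j ≤
      (∏ j, Real.Gamma ((n j : ℝ) + 1 / 2)) /
        (Real.Gamma (1 / 2) ^ (m - 1) * Real.Gamma (((∑ j', n j' : ℕ) : ℝ) + 1 / 2)) :=
  krichevsky_trofimov_bound_general m hm n
end
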